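/- Let F be an r-sort species admitting a composition operator Η, and let Ω1, Ω2, Ω3, Ω4 be pairwise componentwise-disjoint r-tuples of finite sets. Then every Η-bracketing of F[Ω1], F[Ω2], F[Ω3], F[Ω4] equals the intersection of the seven sets η(F[Ω1⨿Ω2]×F[Ω3⨿Ω4]), η(F[Ω1⨿Ω3]×F[Ω2⨿Ω4]), η(F[Ω2⨿Ω3]×F[Ω1⨿Ω4]), η(F[Ω1]×F[Ω2⨿Ω3⨿Ω4]), η(F[Ω2]×F[Ω1⨿Ω3⨿Ω4]), η(F[Ω3]×F[Ω1⨿Ω2⨿Ω4]), and η(F[Ω4]×F[Ω1⨿Ω2⨿Ω3]). -/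

import Mathlib

open scoped Classical

noncomputable section

/-- Objects of `Set^r`: `r`-tuples of finite sets (realized as finite subsets of `ℕ`). -/
abbrev Obj (r : ℕ) := Fin r → Finset ℕ

variable {r : ℕ}

/-- The `r`-tuple of empty sets. -/
def oEmpty (r : ℕ) : Obj r := fun _ => ∅

/-- Componentwise union (the disjoint union `⨿` when the arguments are
componentwise disjoint). -/
def oUnion (Ω₁ Ω₂ : Obj r) : Obj r := fun i => Ω₁ i ∪ Ω₂ i

/-- Componentwise intersection. -/
def oInter (Ω₁ Ω₂ : Obj r) : Obj r := fun i => Ω₁ i ∩ Ω₂ i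

/-- Componentwise set difference. -/
def oDiff (Ω₁ Ω₂ : Obj r) : Obj r := fun i => Ω₁ i \ Ω₂ i

/-- Componentwise disjointness. -/
def oDisj (Ω₁ Ω₂ : Obj r) : Prop := ∀ i, Disjoint (Ω₁ i) (Ω₂ i)

/-- Componentwise containment. -/
def oSub (Ω₁ Ω₂ : Obj r) : Prop := ∀ i, Ω₁ i ⊆ Ω₂ i

/-- A morphism of `Set^r`: an `r`-tuple of bijections between the components. -/
def Mor (Ω₁ Ω₂ : Obj r) : Type := ∀ i, {x // x ∈ Ω₁ i} ≃ {x // x ∈ Ω₂ i}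

/-- The identity morphism. -/
def idMor (Ω : Obj r) : Mor Ω Ω := fun _ => Equiv.refl _

/-- Composition of morphisms. -/
def compMor {Ω₁ Ω₂ Ω₃ : Obj r} (f : Mor Ω₁ Ω₂) (g : Mor Ω₂ Ω₃) : Mor Ω₁ Ω₃ :=
  fun i => (f i).trans (g i)

/-- An `r`-sort species: a (covariant) functor from `Set^r` to the category of
finite sets and bijections.  The value `F[Ω]` is the finite set `obj Ω`, and the
action on a morphism `f` is encoded by the function `map f : ℕ → ℕ` (only its
values on `obj Ω₁` are relevant). -/
structure Species (r : ℕ) where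
  obj : Obj r → Finset ℕ
  map : ∀ {Ω₁ Ω₂ : Obj r}, Mor Ω₁ Ω₂ → ℕ → ℕ
  map_mem : ∀ {Ω₁ Ω₂ : Obj r} (f : Mor Ω₁ Ω₂), ∀ x ∈ obj Ω₁, map f x ∈ obj Ω₂
  map_id : ∀ (Ω : Obj r), ∀ x ∈ obj Ω, map (idMor Ω) x = x
  map_comp : ∀ {Ω₁ Ω₂ Ω₃ : Obj r} (f : Mor Ω₁ Ω₂) (g : Mor Ω₂ Ω₃), ∀ x ∈ obj Ω₁,
    map (compMor f g) x = map g (map f x)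

/-- The canonical identification of a disjoint union `s ∪ t` with the sum `s ⊕ t`. -/
def finsetSumEquiv {s t : Finset ℕ} (h : Disjoint s t) :
    {x // x ∈ s ∪ t} ≃ {x // x ∈ s} ⊕ {x // x ∈ t} :=
  (Equiv.subtypeEquivRight (fun x => by simp)).trans
    (Equiv.Set.union (s := (↑s : Set ℕ)) (t := (↑t : Set ℕ)) (by exact_mod_cast h))

/-- The disjoint union of two bijections, as a bijection between unions. -/
def finsetUnionEquiv {s t s' t' : Finset ℕ} (h : Disjoint s t) (h' : Disjoint s' t')
    (f : {x // x ∈ s} ≃ {x // x ∈ s'}) (g : {x // x ∈ t} ≃ {x // x ∈ t'}) :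
    {x // x ∈ s ∪ t} ≃ {x // x ∈ s' ∪ t'} :=
  (finsetSumEquiv h).trans ((f.sumCongr g).trans (finsetSumEquiv h').symm)

/-- The disjoint union `f ⨿ g` of two morphisms of `Set^r`. -/
def morUnion {Ω₁ Ω₂ Ω₁' Ω₂' : Obj r} (h : oDisj Ω₁ Ω₂) (h' : oDisj Ω₁' Ω₂')
    (f : Mor Ω₁ Ω₁') (g : Mor Ω₂ Ω₂') : Mor (oUnion Ω₁ Ω₂) (oUnion Ω₁' Ω₂') :=
  fun i => finsetUnionEquiv (h i) (h' i) (f i) (g i)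

/-- A composition operator `Η` for the species `F`: a natural transformation from
`F × F` (on pairs of componentwise disjoint objects) to `F ∘ ⨿` with injective
components, satisfying Axiom (D1). -/
structure CompOp {r : ℕ} (F : Species r) where
  η : Obj r → Obj r → ℕ × ℕ → ℕ
  mem_η : ∀ {Ω₁ Ω₂ : Obj r}, oDisj Ω₁ Ω₂ → ∀ x ∈ F.obj Ω₁, ∀ y ∈ F.obj Ω₂,
    η Ω₁ Ω₂ (x, y) ∈ F.obj (oUnion Ω₁ Ω₂)
  inj_η : ∀ {Ω₁ Ω₂ : Obj r}, oDisj Ω₁ Ω₂ →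
    Set.InjOn (η Ω₁ Ω₂) ((F.obj Ω₁ : Set ℕ) ×ˢ (F.obj Ω₂ : Set ℕ))
  natural : ∀ {Ω₁ Ω₂ Ω₁' Ω₂' : Obj r} (h : oDisj Ω₁ Ω₂) (h' : oDisj Ω₁' Ω₂')
    (f : Mor Ω₁ Ω₁') (g : Mor Ω₂ Ω₂'), ∀ x ∈ F.obj Ω₁, ∀ y ∈ F.obj Ω₂,
    F.map (morUnion h h' f g) (η Ω₁ Ω₂ (x, y)) = η Ω₁' Ω₂' (F.map f x, F.map g y)
  D1 : ∀ {Ω₁ Ω₂ Ω₃ Ω₄ : Obj r}, oDisj Ω₁ Ω₂ → oDisj Ω₃ Ω₄ →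
    oUnion Ω₁ Ω₂ = oUnion Ω₃ Ω₄ →
    η Ω₁ Ω₂ '' ((F.obj Ω₁ : Set ℕ) ×ˢ (F.obj Ω₂ : Set ℕ)) ∩
      η Ω₃ Ω₄ '' ((F.obj Ω₃ : Set ℕ) ×ˢ (F.obj Ω₄ : Set ℕ)) =
    η Ω₁ Ω₂ ''
      ((η (oInter Ω₁ Ω₃) (oInter Ω₁ Ω₄) ''
          ((F.obj (oInter Ω₁ Ω₃) : Set ℕ) ×ˢ (F.obj (oInter Ω₁ Ω₄) : Set ℕ))) ×ˢ
        (η (oInter Ω₂ Ω₃) (oInter Ω₂ Ω₄) ''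
          ((F.obj (oInter Ω₂ Ω₃) : Set ℕ) ×ˢ (F.obj (oInter Ω₂ Ω₄) : Set ℕ))))

/-- The set `F_Η[Ω]` of indecomposable elements of `F[Ω]`. -/
def indec (F : Species r) (E : CompOp F) (Ω : Obj r) : Set ℕ :=
  if Ω = oEmpty r then ∅
  else (F.obj Ω : Set ℕ) \
    ⋃ (p : Obj r × Obj r) (_ : oDisj p.1 p.2) (_ : p.1 ≠ oEmpty r) (_ : p.2 ≠ oEmpty r)
      (_ : oUnion p.1 p.2 = Ω),
      E.η p.1 p.2 '' ((F.obj p.1 : Set ℕ) ×ˢ (F.obj p.2 : Set ℕ))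

/-- The sets `F_Η^(k)[Ω]` of elements of `F[Ω]` consisting of exactly `k`
indecomposable components. -/
def indecK (F : Species r) (E : CompOp F) : ℕ → Obj r → Set ℕ
  | 0 => fun Ω => if Ω = oEmpty r then (F.obj (oEmpty r) : Set ℕ) else ∅
  | (k + 1) => fun Ω => ⋃ (Ω₁ : Obj r) (_ : oSub Ω₁ Ω),
      E.η Ω₁ (oDiff Ω Ω₁) '' ((indec F E Ω₁) ×ˢ (indecK F E k (oDiff Ω Ω₁)))

/-- `Ω_I`: the componentwise disjoint union of the family `Ωs` over the index set `s`. -/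
def bigU {ι : Type} [DecidableEq ι] (Ωs : ι → Obj r) (s : Finset ι) : Obj r :=
  fun i => s.biUnion (fun j => Ωs j i)

/-- `Brack F E Ωs leaf s B` says that `B` is an `Η`-bracketing of the sets
`leaf (Ωs i)`, `i ∈ s` (each occurring exactly once).  For `leaf Ω = F[Ω]` this is an
`Η`-bracketing of the `F[Ωs i]`; for `leaf = indec F E` it is an `Η`-bracketing of
the `F_Η[Ωs i]`. -/
inductive Brack (F : Species r) (E : CompOp F) {ι : Type} [DecidableEq ι]
    (Ωs : ι → Obj r) (leaf : Obj r → Set ℕ) : Finset ι → Set ℕ → Prop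
  | single (i : ι) : Brack F E Ωs leaf {i} (leaf (Ωs i))
  | node {s t : Finset ι} {B₁ B₂ : Set ℕ} :
      Disjoint s t → s.Nonempty → t.Nonempty →
      Brack F E Ωs leaf s B₁ → Brack F E Ωs leaf t B₂ →
      Brack F E Ωs leaf (s ∪ t) (E.η (bigU Ωs s) (bigU Ωs t) '' (B₁ ×ˢ B₂))

/-- A `Λ`-weight on `(F, Η)`: Axioms (W0), (W1), (W2). -/
structure Weight {r : ℕ} (F : Species r) (E : CompOp F) (Λ : Type) [CommRing Λ]
    [Algebra ℚ Λ] where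
  w : Obj r → ℕ → Λ
  W0 : ∀ x ∈ F.obj (oEmpty r), w (oEmpty r) x = 1
  W1 : ∀ {Ω Ω' : Obj r} (f : Mor Ω Ω'), ∀ x ∈ F.obj Ω, w Ω' (F.map f x) = w Ω x
  W2 : ∀ {Ω₁ Ω₂ : Obj r}, oDisj Ω₁ Ω₂ → ∀ x ∈ indec F E Ω₁, ∀ y ∈ F.obj Ω₂,
    w (oUnion Ω₁ Ω₂) (E.η Ω₁ Ω₂ (x, y)) = w Ω₁ x * w Ω₂ y

/-- The standard object `([n₁], …, [n_r])`, with `[n] = {1, …, n}`. -/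
def stdObj {r : ℕ} (n : Fin r → ℕ) : Obj r := fun i => Finset.Icc 1 (n i)

/-- The exponential generating function
`Σ_{n₁,…,n_r ≥ 0} Σ_{x ∈ S[([n₁],…,[n_r])]} w(x) z₁^{n₁} ⋯ z_r^{n_r}/(n₁! ⋯ n_r!)`
of a subfamily `S` of a species `F`, with respect to a weight `w`. -/
def GF {r : ℕ} {Λ : Type} [CommRing Λ] [Algebra ℚ Λ] (F : Species r)
    (S : Obj r → Set ℕ) (w : Obj r → ℕ → Λ) : MvPowerSeries (Fin r) Λ :=
  fun d => (algebraMap ℚ Λ (∏ i, (1 / (Nat.factorial (d i)) : ℚ))) *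
    ∑ x ∈ (F.obj (stdObj fun i => d i)).filter (fun x => x ∈ S (stdObj fun i => d i)),
      w (stdObj fun i => d i) x

/-- The exponential `exp f = Σ_{k ≥ 0} f^k / k!` of a multivariate formal power
series `f` with zero constant term (the coefficient of a given monomial only
receives contributions from `k` at most the total degree). -/
def mvExp {σ Λ : Type} [CommRing Λ] [Algebra ℚ Λ] (f : MvPowerSeries σ Λ) :
    MvPowerSeries σ Λ :=
  fun d => ∑ k ∈ Finset.range ((d.sum fun _ m => m) + 1),
    algebraMap ℚ Λ ((1 : ℚ) / (Nat.factorial k)) * MvPowerSeries.coeff d (f ^ k)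

/-- The logarithm `log f = Σ_{k ≥ 1} (-1)^{k+1} (f-1)^k / k` of a multivariate
formal power series `f` with constant term `1`. -/
def mvLog {σ Λ : Type} [CommRing Λ] [Algebra ℚ Λ] (f : MvPowerSeries σ Λ) :
    MvPowerSeries σ Λ :=
  fun d => ∑ k ∈ Finset.Icc 1 (d.sum fun _ m => m),
    algebraMap ℚ Λ ((-1 : ℚ) ^ (k + 1) / k) * MvPowerSeries.coeff d ((f - 1) ^ k)

/-- The refined generating function `G̃F_F(z₁,…,z_r,y)`, a power series in
`z₁, …, z_r` with coefficients that are polynomials in `y` (recorded via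
`Polynomial Λ`, the variable `y` being `Polynomial.X`):
`Σ_{n₁,…,n_r ≥ 0} Σ_k Σ_{x ∈ F_Η^(k)[([n₁],…,[n_r])]} y^k w(x) z₁^{n₁}⋯z_r^{n_r}/(n₁!⋯n_r!)`
(for fixed `n₁, …, n_r` only the `k ≤ n₁ + ⋯ + n_r` contribute, since
`F_Η^(k)[Ω] = ∅ for k > ‖Ω‖`). -/
def tGF {r : ℕ} {Λ : Type} [CommRing Λ] [Algebra ℚ Λ] (F : Species r) (E : CompOp F)
    (w : Obj r → ℕ → Λ) : MvPowerSeries (Fin r) (Polynomial Λ) :=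
  fun d => Polynomial.C (algebraMap ℚ Λ (∏ i, (1 / (Nat.factorial (d i)) : ℚ))) *
    ∑ k ∈ Finset.range ((∑ i, d i) + 1), Polynomial.X ^ k *
      Polynomial.C (∑ x ∈ (F.obj (stdObj fun i => d i)).filter
          (fun x => x ∈ indecK F E k (stdObj fun i => d i)),
        w (stdObj fun i => d i) x)

/-- The species `E(F_Η)` of sets of `F_Η`-structures:  `E(F_Η)[Ω]` consists of all
finite sets `{(x₁,Ω₁),…,(x_k,Ω_k)}` with `x_i ∈ F_Η[Ω_i]`, the `Ω_i` nonempty and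
pairwise componentwise disjoint, and `Ω₁ ⨿ ⋯ ⨿ Ω_k = Ω`. -/
def ESet {r : ℕ} (F : Species r) (E : CompOp F) (Ω : Obj r) :
    Set (Finset (ℕ × Obj r)) :=
  { s | (∀ p ∈ s, p.1 ∈ indec F E p.2 ∧ p.2 ≠ oEmpty r) ∧
        (∀ p ∈ s, ∀ q ∈ s, p ≠ q → oDisj p.2 q.2) ∧
        (∀ i, Ω i = s.biUnion (fun p => p.2 i)) }

/-- The bijection between a finite set and its image under a map injective on it. -/
def imageEquiv {u : Finset ℕ} (g : ℕ → ℕ) (hg : Set.InjOn g (u : Set ℕ)) :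
    {x // x ∈ u} ≃ {x // x ∈ u.image g} :=
  Equiv.ofBijective (fun x => ⟨g x, Finset.mem_image_of_mem g x.2⟩) (by
    constructor
    · rintro ⟨a, ha⟩ ⟨b, hb⟩ hab
      exact Subtype.ext (hg (by exact_mod_cast ha) (by exact_mod_cast hb)
        (congrArg Subtype.val hab))
    · rintro ⟨y, hy⟩
      rcases Finset.mem_image.mp hy with ⟨a, ha, rfl⟩
      exact ⟨⟨a, ha⟩, rfl⟩)

/-- The underlying function `ℕ → ℕ` of the `i`-th component of a morphism. -/
def apMor {Ω Ω' : Obj r} (f : Mor Ω Ω') (i : Fin r) (a : ℕ) : ℕ :=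
  if h : a ∈ Ω i then ((f i) ⟨a, h⟩ : ℕ) else a

/-- The componentwise image of a subobject `O ⊆ Ω` under a morphism `f : Ω → Ω'`. -/
def oImage {Ω Ω' : Obj r} (f : Mor Ω Ω') (O : Obj r) : Obj r :=
  fun i => (O i).image (apMor f i)

/-- The restriction of a morphism `f : Ω → Ω'` to a subobject `O ⊆ Ω`. -/
def restrictMor {Ω Ω' : Obj r} (f : Mor Ω Ω') {O : Obj r} (hO : oSub O Ω) :
    Mor O (oImage f O) :=
  fun i => imageEquiv (apMor f i) (by
    intro a ha b hb hab
    have ha' : a ∈ Ω i := hO i (by exact_mod_cast ha)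
    have hb' : b ∈ Ω i := hO i (by exact_mod_cast hb)
    have h1 : ((f i) ⟨a, ha'⟩ : ℕ) = ((f i) ⟨b, hb'⟩ : ℕ) := by
      simpa [apMor, dif_pos ha', dif_pos hb'] using hab
    have h2 := (f i).injective (Subtype.ext h1)
    exact congrArg Subtype.val h2)

/-- The induced action of a morphism `f : Ω → Ω'` on `E(F_Η)[Ω]`. -/
def Emap {r : ℕ} (F : Species r) {Ω Ω' : Obj r} (f : Mor Ω Ω')
    (s : Finset (ℕ × Obj r)) : Finset (ℕ × Obj r) :=
  s.image (fun p =>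
    if h : oSub p.2 Ω then (F.map (restrictMor f h) p.1, oImage f p.2) else p)

/-!
Write `S(X, Y) = η(F[X] × F[Y])`. Axiom (D1) for the decompositions `(X, Y), (X, Y)` gives
`S(X, Y) = η(S(X, ∅) × S(∅, Y))`, so by injectivity of `η` the unit laws
`S(∅, A) = F[A] = S(A, ∅)` hold; the needed element of `F[∅]` comes from `S(Ω, Ω')` for a
disjoint copy `Ω'` of any `Ω` with `F[Ω] ≠ ∅`. Axiom (D1) for `(A, B), (B, A)` then gives
`S(A, B) = S(B, A)`.

For a family `(Ω_i)_{i ∈ s}` let `P(s)` be the intersection of the sets `S(Ω_{s ∩ K}, Ω_{s ∖ K})`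
over all `K`. Axiom (D1) for `(Ω_s, Ω_t)` and `(Ω_{(s ∪ t) ∩ K}, Ω_{(s ∪ t) ∖ K})`, with
injectivity of `η`, shows `η(P(s) × P(t)) = P(s ∪ t)`; hence every `Η`-bracketing of the
`F[Ω_i]`, whatever its shape, equals `P(s)`. For four sets, symmetry and the unit laws reduce
the sixteen bipartitions to the seven in the statement.
-/

theorem oDisj.symm {A B : Obj r} (h : oDisj A B) : oDisj B A := fun i => (h i).symm

theorem oDisj_oEmpty_left (A : Obj r) : oDisj (oEmpty r) A :=
  fun _ => Finset.disjoint_empty_left _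

theorem oDisj_oEmpty_right (A : Obj r) : oDisj A (oEmpty r) :=
  fun _ => Finset.disjoint_empty_right _

theorem oUnion_oEmpty_left (A : Obj r) : oUnion (oEmpty r) A = A :=
  funext fun _ => Finset.empty_union _

theorem oUnion_oEmpty_right (A : Obj r) : oUnion A (oEmpty r) = A :=
  funext fun _ => Finset.union_empty _

theorem oUnion_comm (A B : Obj r) : oUnion A B = oUnion B A :=
  funext fun _ => Finset.union_comm _ _

theorem oUnion_assoc (A B C : Obj r) : oUnion (oUnion A B) C = oUnion A (oUnion B C) :=
  funext fun _ => Finset.union_assoc _ _ _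

theorem oInter_self (A : Obj r) : oInter A A = A := funext fun _ => Finset.inter_self _

theorem oInter_eq_oEmpty {A B : Obj r} (h : oDisj A B) : oInter A B = oEmpty r :=
  funext fun i => Finset.disjoint_iff_inter_eq_empty.mp (h i)

theorem exists_oDisj_mor (Ω : Obj r) : ∃ Ω' : Obj r, oDisj Ω Ω' ∧ Nonempty (Mor Ω Ω') := by
  obtain ⟨N, hN⟩ := Finset.exists_nat_subset_range (Finset.univ.biUnion Ω)
  refine ⟨fun i => (Ω i).image (· + N), fun i => Finset.disjoint_left.mpr ?_,
    ⟨fun i => imageEquiv _ (add_left_injective N).injOn⟩⟩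
  intro a ha ha'
  obtain ⟨b, -, rfl⟩ := Finset.mem_image.mp ha'
  have : b + N < N := Finset.mem_range.mp (hN (Finset.mem_biUnion.mpr ⟨i, by simp, ha⟩))
  omega

section bigU

variable {ι : Type} [DecidableEq ι] (Ωs : ι → Obj r)

theorem bigU_empty : bigU Ωs ∅ = oEmpty r := rfl

theorem bigU_singleton (i : ι) : bigU Ωs {i} = Ωs i :=
  funext fun _ => Finset.singleton_biUnion

theorem bigU_insert (i : ι) (s : Finset ι) : bigU Ωs (insert i s) = oUnion (Ωs i) (bigU Ωs s) :=
  funext fun _ => Finset.biUnion_insert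

theorem bigU_union (s t : Finset ι) : bigU Ωs (s ∪ t) = oUnion (bigU Ωs s) (bigU Ωs t) := by
  funext x
  ext a
  simp [bigU, oUnion, or_and_right, exists_or]

variable {Ωs}

theorem oDisj_bigU (hd : Pairwise fun i j => oDisj (Ωs i) (Ωs j)) {s t : Finset ι}
    (hst : Disjoint s t) : oDisj (bigU Ωs s) (bigU Ωs t) :=
  fun x => (Finset.disjoint_biUnion_left _ _ _).mpr fun i hi =>
    (Finset.disjoint_biUnion_right _ _ _).mpr
      fun j hj => hd (by rintro rfl; exact Finset.disjoint_left.mp hst hi hj) x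

theorem bigU_inter (hd : Pairwise fun i j => oDisj (Ωs i) (Ωs j)) (s t : Finset ι) :
    oInter (bigU Ωs s) (bigU Ωs t) = bigU Ωs (s ∩ t) := by
  funext x
  ext a
  simp only [oInter, bigU, Finset.mem_inter, Finset.mem_biUnion]
  constructor
  · rintro ⟨⟨i, hi, hai⟩, ⟨j, hj, haj⟩⟩
    obtain rfl : i = j := by
      by_contra hij
      exact Finset.disjoint_left.mp (hd hij x) hai haj
    exact ⟨i, ⟨hi, hj⟩, hai⟩
  · rintro ⟨i, ⟨hi, hj⟩, hai⟩
    exact ⟨⟨i, hi, hai⟩, ⟨i, hj, hai⟩⟩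

end bigU

namespace CompOp

variable {F : Species r} (E : CompOp F)

def splitSet (X Y : Obj r) : Set ℕ := E.η X Y '' ((F.obj X : Set ℕ) ×ˢ (F.obj Y : Set ℕ))

theorem splitSet_subset {X Y : Obj r} (h : oDisj X Y) :
    E.splitSet X Y ⊆ F.obj (oUnion X Y) := by
  rintro _ ⟨⟨x, y⟩, ⟨hx, hy⟩, rfl⟩
  exact E.mem_η h x hx y hy

theorem splitSet_eq_image_splitSet_oEmpty {X Y : Obj r} (h : oDisj X Y) :
    E.splitSet X Y =
      E.η X Y '' (E.splitSet X (oEmpty r) ×ˢ E.splitSet (oEmpty r) Y) := by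
  have hD1 := E.D1 h h rfl
  rwa [Set.inter_self, oInter_self, oInter_eq_oEmpty h, oInter_eq_oEmpty h.symm,
    oInter_self] at hD1

theorem obj_prod_eq_splitSet_prod {X Y : Obj r} (h : oDisj X Y) :
    (F.obj X : Set ℕ) ×ˢ (F.obj Y : Set ℕ) =
      E.splitSet X (oEmpty r) ×ˢ E.splitSet (oEmpty r) Y := by
  have hX := E.splitSet_subset (oDisj_oEmpty_right X)
  have hY := E.splitSet_subset (oDisj_oEmpty_left Y)
  rw [oUnion_oEmpty_right] at hX
  rw [oUnion_oEmpty_left] at hY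
  exact ((E.inj_η h).image_eq_image_iff subset_rfl (Set.prod_mono hX hY)).mp
    (E.splitSet_eq_image_splitSet_oEmpty h)

theorem obj_oEmpty_nonempty (E : CompOp F) {Ω : Obj r} (hΩ : (F.obj Ω).Nonempty) :
    (F.obj (oEmpty r)).Nonempty := by
  obtain ⟨x, hx⟩ := hΩ
  obtain ⟨Ω', hΩΩ', ⟨f⟩⟩ := exists_oDisj_mor Ω
  have hmem : (x, F.map f x) ∈ (F.obj Ω : Set ℕ) ×ˢ (F.obj Ω' : Set ℕ) :=
    ⟨hx, F.map_mem f x hx⟩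
  rw [E.obj_prod_eq_splitSet_prod hΩΩ'] at hmem
  obtain ⟨⟨e, _⟩, he, _⟩ := hmem.2
  exact ⟨e, he.1⟩

theorem splitSet_oEmpty_left (A : Obj r) : E.splitSet (oEmpty r) A = F.obj A := by
  refine (oUnion_oEmpty_left A ▸ E.splitSet_subset (oDisj_oEmpty_left A)).antisymm
    fun y hy => ?_
  obtain ⟨e, he⟩ := E.obj_oEmpty_nonempty ⟨y, hy⟩
  have hmem : (e, y) ∈ (F.obj (oEmpty r) : Set ℕ) ×ˢ (F.obj A : Set ℕ) := ⟨he, hy⟩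
  rw [E.obj_prod_eq_splitSet_prod (oDisj_oEmpty_left A)] at hmem
  exact hmem.2

theorem splitSet_oEmpty_right (A : Obj r) : E.splitSet A (oEmpty r) = F.obj A := by
  refine (oUnion_oEmpty_right A ▸ E.splitSet_subset (oDisj_oEmpty_right A)).antisymm
    fun y hy => ?_
  obtain ⟨e, he⟩ := E.obj_oEmpty_nonempty ⟨y, hy⟩
  have hmem : (y, e) ∈ (F.obj A : Set ℕ) ×ˢ (F.obj (oEmpty r) : Set ℕ) := ⟨hy, he⟩
  rw [E.obj_prod_eq_splitSet_prod (oDisj_oEmpty_right A)] at hmem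
  exact hmem.1

theorem splitSet_subset_splitSet_swap {A B : Obj r} (h : oDisj A B) :
    E.splitSet A B ⊆ E.splitSet B A := by
  have hD1 := E.D1 h h.symm (oUnion_comm A B)
  rw [oInter_eq_oEmpty h, oInter_self, oInter_self, oInter_eq_oEmpty h.symm] at hD1
  change E.splitSet A B ∩ E.splitSet B A =
    E.η A B '' (E.splitSet (oEmpty r) A ×ˢ E.splitSet B (oEmpty r)) at hD1
  rw [splitSet_oEmpty_left, splitSet_oEmpty_right] at hD1
  exact Set.inter_eq_left.mp hD1

theorem splitSet_comm {A B : Obj r} (h : oDisj A B) : E.splitSet A B = E.splitSet B A :=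
  (E.splitSet_subset_splitSet_swap h).antisymm (E.splitSet_subset_splitSet_swap h.symm)

variable {ι : Type} [DecidableEq ι] {Ωs : ι → Obj r}

def bracketSet (Ωs : ι → Obj r) (s : Finset ι) : Set ℕ :=
  ⋂ K : Finset ι, E.splitSet (bigU Ωs (s ∩ K)) (bigU Ωs (s \ K))

theorem bracketSet_singleton (i : ι) : E.bracketSet Ωs {i} = F.obj (Ωs i) := by
  have hK (K : Finset ι) :
      E.splitSet (bigU Ωs ({i} ∩ K)) (bigU Ωs ({i} \ K)) = F.obj (Ωs i) := by
    by_cases hi : i ∈ K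
    · rw [Finset.singleton_inter_of_mem hi,
        Finset.sdiff_eq_empty_iff_subset.mpr (Finset.singleton_subset_iff.mpr hi),
        bigU_singleton, bigU_empty, splitSet_oEmpty_right]
    · rw [Finset.singleton_inter_of_notMem hi,
        Finset.sdiff_eq_self_of_disjoint (Finset.disjoint_singleton_left.mpr hi),
        bigU_singleton, bigU_empty, splitSet_oEmpty_left]
  simp only [bracketSet, hK, Set.iInter_const]

theorem splitSet_bigU_subset (hd : Pairwise fun i j => oDisj (Ωs i) (Ωs j))
    (s K : Finset ι) :
    E.splitSet (bigU Ωs (s ∩ K)) (bigU Ωs (s \ K)) ⊆ F.obj (bigU Ωs s) := by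
  have h := E.splitSet_subset (oDisj_bigU hd (Finset.disjoint_sdiff_inter s K).symm)
  rwa [← bigU_union, Finset.union_comm, Finset.sdiff_union_inter] at h

theorem splitSet_inter_splitSet_bigU (hd : Pairwise fun i j => oDisj (Ωs i) (Ωs j))
    {s t : Finset ι} (hst : Disjoint s t) (K : Finset ι) :
    E.splitSet (bigU Ωs s) (bigU Ωs t) ∩
        E.splitSet (bigU Ωs ((s ∪ t) ∩ K)) (bigU Ωs ((s ∪ t) \ K)) =
      E.η (bigU Ωs s) (bigU Ωs t) ''
        (E.splitSet (bigU Ωs (s ∩ K)) (bigU Ωs (s \ K)) ×ˢ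
          E.splitSet (bigU Ωs (t ∩ K)) (bigU Ωs (t \ K))) := by
  have hD1 := E.D1 (oDisj_bigU hd hst)
    (oDisj_bigU hd (Finset.disjoint_sdiff_inter (s ∪ t) K).symm)
    (by rw [← bigU_union, ← bigU_union, Finset.union_comm ((s ∪ t) ∩ K),
      Finset.sdiff_union_inter])
  have hrestrict {u : Finset ι} (hu : u ⊆ s ∪ t) :
      u ∩ ((s ∪ t) ∩ K) = u ∩ K ∧ u ∩ ((s ∪ t) \ K) = u \ K := by
    rw [← Finset.inter_assoc, ← Finset.inter_sdiff_assoc, Finset.inter_eq_left.mpr hu]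
    exact ⟨rfl, rfl⟩
  rwa [bigU_inter hd, bigU_inter hd, bigU_inter hd, bigU_inter hd,
    (hrestrict Finset.subset_union_left).1, (hrestrict Finset.subset_union_left).2,
    (hrestrict Finset.subset_union_right).1, (hrestrict Finset.subset_union_right).2] at hD1

theorem image_bracketSet_prod (hd : Pairwise fun i j => oDisj (Ωs i) (Ωs j))
    {s t : Finset ι} (hst : Disjoint s t) :
    E.η (bigU Ωs s) (bigU Ωs t) '' (E.bracketSet Ωs s ×ˢ E.bracketSet Ωs t) =
      E.bracketSet Ωs (s ∪ t) := by
  ext x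
  simp only [bracketSet, Set.mem_iInter]
  constructor
  · rintro ⟨⟨a, b⟩, ⟨ha, hb⟩, rfl⟩ K
    rw [Set.mem_iInter] at ha hb
    exact ((E.splitSet_inter_splitSet_bigU hd hst K).symm ▸
      Set.mem_image_of_mem _ (Set.mk_mem_prod (ha K) (hb K)) :).2
  · intro hx
    have hsplit : x ∈ E.splitSet (bigU Ωs s) (bigU Ωs t) := by
      simpa [Finset.union_sdiff_cancel_left hst] using hx s
    obtain ⟨⟨a, b⟩, hab, rfl⟩ := hsplit
    -- By injectivity of `η` on `F[Ω_s] × F[Ω_t]`, each bipartition `K` splits `η (a, b)`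
    -- through `(a, b)` itself.
    have key (K : Finset ι) : (a, b) ∈ E.splitSet (bigU Ωs (s ∩ K)) (bigU Ωs (s \ K)) ×ˢ
        E.splitSet (bigU Ωs (t ∩ K)) (bigU Ωs (t \ K)) := by
      have hmem : E.η (bigU Ωs s) (bigU Ωs t) (a, b) ∈ E.splitSet (bigU Ωs s) (bigU Ωs t) ∩
          E.splitSet (bigU Ωs ((s ∪ t) ∩ K)) (bigU Ωs ((s ∪ t) \ K)) :=
        ⟨Set.mem_image_of_mem _ hab, hx K⟩
      rw [E.splitSet_inter_splitSet_bigU hd hst K] at hmem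
      obtain ⟨⟨a', b'⟩, hab', heq⟩ := hmem
      have hsub := Set.prod_mono (E.splitSet_bigU_subset hd s K) (E.splitSet_bigU_subset hd t K)
      rwa [E.inj_η (oDisj_bigU hd hst) (hsub hab') hab heq] at hab'
    exact ⟨(a, b), ⟨Set.mem_iInter.mpr fun K => (key K).1,
      Set.mem_iInter.mpr fun K => (key K).2⟩, rfl⟩

theorem bracketSet_univ_eq_biInter [Fintype ι] (hd : Pairwise fun i j => oDisj (Ωs i) (Ωs j))
    (L : Finset (Finset ι)) (hL : L.Nonempty)
    (hcover : ∀ K : Finset ι, K ∈ L ∨ Kᶜ ∈ L ∨ K = ∅ ∨ K = Finset.univ) :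
    E.bracketSet Ωs Finset.univ = ⋂ K ∈ L, E.splitSet (bigU Ωs K) (bigU Ωs Kᶜ) := by
  have hcomm (K : Finset ι) :
      E.splitSet (bigU Ωs Kᶜ) (bigU Ωs Kᶜᶜ) = E.splitSet (bigU Ωs K) (bigU Ωs Kᶜ) := by
    rw [compl_compl, E.splitSet_comm (oDisj_bigU hd disjoint_compl_left)]
  ext x
  simp only [bracketSet, Set.mem_iInter, Finset.univ_inter, ← Finset.compl_eq_univ_sdiff]
  refine ⟨fun hx K _ => hx K, fun hx K => ?_⟩
  have hfull : x ∈ F.obj (bigU Ωs Finset.univ) := by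
    obtain ⟨K₀, hK₀⟩ := hL
    have hsub := E.splitSet_bigU_subset hd Finset.univ K₀
    rw [Finset.univ_inter, ← Finset.compl_eq_univ_sdiff] at hsub
    exact hsub (hx K₀ hK₀)
  rcases hcover K with hK | hK | rfl | rfl
  · exact hx K hK
  · exact hcomm K ▸ hx Kᶜ hK
  · rwa [bigU_empty, Finset.compl_empty, splitSet_oEmpty_left]
  · rwa [Finset.compl_univ, bigU_empty, splitSet_oEmpty_right]

end CompOp

theorem Brack.eq_bracketSet {F : Species r} {E : CompOp F} {ι : Type} [DecidableEq ι]
    {Ωs : ι → Obj r} (hd : Pairwise fun i j => oDisj (Ωs i) (Ωs j)) {s : Finset ι}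
    {B : Set ℕ} (hB : Brack F E Ωs (fun Ω => (F.obj Ω : Set ℕ)) s B) :
    B = E.bracketSet Ωs s := by
  induction hB with
  | single i => exact (E.bracketSet_singleton i).symm
  | node hst _ _ _ _ ih₁ ih₂ => rw [ih₁, ih₂, E.image_bracketSet_prod hd hst]

theorem stmt5_general {r : ℕ} (F : Species r) (E : CompOp F)
    (Ωs : Fin 4 → Obj r) (hd : ∀ i j, i ≠ j → oDisj (Ωs i) (Ωs j))
    (B : Set ℕ) (hB : Brack F E Ωs (fun Ω => (F.obj Ω : Set ℕ)) Finset.univ B) :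
    B = E.η (oUnion (Ωs 0) (Ωs 1)) (oUnion (Ωs 2) (Ωs 3)) '' ((F.obj (oUnion (Ωs 0) (Ωs 1)) : Set ℕ) ×ˢ (F.obj (oUnion (Ωs 2) (Ωs 3)) : Set ℕ)) ∩
        E.η (oUnion (Ωs 0) (Ωs 2)) (oUnion (Ωs 1) (Ωs 3)) '' ((F.obj (oUnion (Ωs 0) (Ωs 2)) : Set ℕ) ×ˢ (F.obj (oUnion (Ωs 1) (Ωs 3)) : Set ℕ)) ∩
        E.η (oUnion (Ωs 1) (Ωs 2)) (oUnion (Ωs 0) (Ωs 3)) '' ((F.obj (oUnion (Ωs 1) (Ωs 2)) : Set ℕ) ×ˢ (F.obj (oUnion (Ωs 0) (Ωs 3)) : Set ℕ)) ∩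
        E.η (Ωs 0) (oUnion (oUnion (Ωs 1) (Ωs 2)) (Ωs 3)) '' ((F.obj (Ωs 0) : Set ℕ) ×ˢ (F.obj (oUnion (oUnion (Ωs 1) (Ωs 2)) (Ωs 3)) : Set ℕ)) ∩
        E.η (Ωs 1) (oUnion (oUnion (Ωs 0) (Ωs 2)) (Ωs 3)) '' ((F.obj (Ωs 1) : Set ℕ) ×ˢ (F.obj (oUnion (oUnion (Ωs 0) (Ωs 2)) (Ωs 3)) : Set ℕ)) ∩
        E.η (Ωs 2) (oUnion (oUnion (Ωs 0) (Ωs 1)) (Ωs 3)) '' ((F.obj (Ωs 2) : Set ℕ) ×ˢ (F.obj (oUnion (oUnion (Ωs 0) (Ωs 1)) (Ωs 3)) : Set ℕ)) ∩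
        E.η (Ωs 3) (oUnion (oUnion (Ωs 0) (Ωs 1)) (Ωs 2)) '' ((F.obj (Ωs 3) : Set ℕ) ×ˢ (F.obj (oUnion (oUnion (Ωs 0) (Ωs 1)) (Ωs 2)) : Set ℕ)) := by
  have hd' : Pairwise fun i j => oDisj (Ωs i) (Ωs j) := fun i j => hd i j
  rw [hB.eq_bracketSet hd', E.bracketSet_univ_eq_biInter hd'
    {{0, 1}, {0, 2}, {1, 2}, {0}, {1}, {2}, {3}} ⟨{0}, by simp⟩ (by decide)]
  simp only [Finset.mem_insert, Finset.mem_singleton, Set.iInter_iInter_eq_or_left,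
    Set.iInter_iInter_eq_left, show ({0, 1} : Finset (Fin 4))ᶜ = {2, 3} by decide,
    show ({0, 2} : Finset (Fin 4))ᶜ = {1, 3} by decide,
    show ({1, 2} : Finset (Fin 4))ᶜ = {0, 3} by decide,
    show ({0} : Finset (Fin 4))ᶜ = {1, 2, 3} by decide,
    show ({1} : Finset (Fin 4))ᶜ = {0, 2, 3} by decide,
    show ({2} : Finset (Fin 4))ᶜ = {0, 1, 3} by decide,
    show ({3} : Finset (Fin 4))ᶜ = {0, 1, 2} by decide,
    bigU_insert, bigU_singleton, oUnion_assoc, Set.inter_assoc]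
  rfl

/-- Every `Η`-bracketing of `F[Ω₁], F[Ω₂], F[Ω₃], F[Ω₄]` equals the intersection
of the seven sets listed in the statement. -/
theorem stmt5 {r : ℕ} (hr : 0 < r) (F : Species r) (E : CompOp F)
    (hF : ∃ Ω : Obj r, (F.obj Ω).Nonempty)
    (Ωs : Fin 4 → Obj r) (hd : ∀ i j, i ≠ j → oDisj (Ωs i) (Ωs j))
    (B : Set ℕ) (hB : Brack F E Ωs (fun Ω => (F.obj Ω : Set ℕ)) Finset.univ B) :
    B = E.η (oUnion (Ωs 0) (Ωs 1)) (oUnion (Ωs 2) (Ωs 3)) '' ((F.obj (oUnion (Ωs 0) (Ωs 1)) : Set ℕ) ×ˢ (F.obj (oUnion (Ωs 2) (Ωs 3)) : Set ℕ)) ∩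
        E.η (oUnion (Ωs 0) (Ωs 2)) (oUnion (Ωs 1) (Ωs 3)) '' ((F.obj (oUnion (Ωs 0) (Ωs 2)) : Set ℕ) ×ˢ (F.obj (oUnion (Ωs 1) (Ωs 3)) : Set ℕ)) ∩
        E.η (oUnion (Ωs 1) (Ωs 2)) (oUnion (Ωs 0) (Ωs 3)) '' ((F.obj (oUnion (Ωs 1) (Ωs 2)) : Set ℕ) ×ˢ (F.obj (oUnion (Ωs 0) (Ωs 3)) : Set ℕ)) ∩
        E.η (Ωs 0) (oUnion (oUnion (Ωs 1) (Ωs 2)) (Ωs 3)) '' ((F.obj (Ωs 0) : Set ℕ) ×ˢ (F.obj (oUnion (oUnion (Ωs 1) (Ωs 2)) (Ωs 3)) : Set ℕ)) ∩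
        E.η (Ωs 1) (oUnion (oUnion (Ωs 0) (Ωs 2)) (Ωs 3)) '' ((F.obj (Ωs 1) : Set ℕ) ×ˢ (F.obj (oUnion (oUnion (Ωs 0) (Ωs 2)) (Ωs 3)) : Set ℕ)) ∩
        E.η (Ωs 2) (oUnion (oUnion (Ωs 0) (Ωs 1)) (Ωs 3)) '' ((F.obj (Ωs 2) : Set ℕ) ×ˢ (F.obj (oUnion (oUnion (Ωs 0) (Ωs 1)) (Ωs 3)) : Set ℕ)) ∩
        E.η (Ωs 3) (oUnion (oUnion (Ωs 0) (Ωs 1)) (Ωs 2)) '' ((F.obj (Ωs 3) : Set ℕ) ×ˢ (F.obj (oUnion (oUnion (Ωs 0) (Ωs 1)) (Ωs 2)) : Set ℕ)) :=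
  stmt5_general F E Ωs hd B hB

end
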